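/- Let M_Γ be the extracted model of an MCS Γ for HXP extended with the pure axioms no-loops (@_i ¬⟨aⁿ⟩i for all n>0) and no-join (@_j⟨a⟩i ∧ @_k⟨a⟩i → @_j k), and let φ be a formula with M_Γ, Δ_i ⊨ φ. Then the restriction of M_Γ to points reachable from {nom(k) | k ∈ Nom(φ) ∪ {i}} in at most md(φ) steps of R_a, with the nominal function adjusted to map nominals outside Nom(φ)∪{i} arbitrarily into the restriction, still satisfies φ at Δ_i. -/

import Mathlib

/-!
Say a point has depth `≤ d` if it is reachable in at most `d` steps of `R_a` from a point named
in `K = Nom(φ) ∪ {i}`. Named points have depth `0`, and a path `α` leads from depth `≤ d` to depth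
`≤ d + numA α ≤ d + md(α)`. Hence evaluating a subexpression of modal depth `≤ md(φ) - d` at a
point of depth `≤ d` only visits points of depth `≤ md(φ)`, all of which lie in the restriction,
and a simultaneous induction on path and node expressions shows that such subexpressions have the
same truth value in `M_Γ` and in the restriction.
-/

mutual
inductive PExp (P N M E : Type) : Type
  | mod : M → PExp P N M E
  | at_ : N → PExp P N M E
  | test : NExp P N M E → PExp P N M E
  | comp : PExp P N M E → PExp P N M E → PExp P N M E
inductive NExp (P N M E : Type) : Type
  | prop : P → NExp P N M E
  | nom : N → NExp P N M E
  | neg : NExp P N M E → NExp P N M E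
  | conj : NExp P N M E → NExp P N M E → NExp P N M E
  | cmpEq : E → PExp P N M E → PExp P N M E → NExp P N M E
  | cmpNeq : E → PExp P N M E → PExp P N M E → NExp P N M E
end

/-- An abstract hybrid data model (the requirement that each `sim e` is an
equivalence relation is stated as a separate hypothesis where needed). -/
structure Model (P N M E : Type) where
  W : Type
  sim : E → W → W → Prop
  R : M → W → W → Prop
  V : W → P → Prop
  nom : N → W

mutual
def psat {P N M E : Type} (𝔐 : Model P N M E) : PExp P N M E → 𝔐.W → 𝔐.W → Prop
  | .mod a, m, n => 𝔐.R a m n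
  | .at_ i, _, n => 𝔐.nom i = n
  | .test φ, m, n => m = n ∧ nsat 𝔐 φ m
  | .comp α β, m, n => ∃ l, psat 𝔐 α m l ∧ psat 𝔐 β l n
def nsat {P N M E : Type} (𝔐 : Model P N M E) : NExp P N M E → 𝔐.W → Prop
  | .prop p, m => 𝔐.V m p
  | .nom i, m => 𝔐.nom i = m
  | .neg φ, m => ¬ nsat 𝔐 φ m
  | .conj φ ψ, m => nsat 𝔐 φ m ∧ nsat 𝔐 ψ m
  | .cmpEq e α β, m => ∃ n l, psat 𝔐 α m n ∧ psat 𝔐 β m l ∧ 𝔐.sim e n l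
  | .cmpNeq e α β, m => ∃ n l, psat 𝔐 α m n ∧ psat 𝔐 β m l ∧ ¬ 𝔐.sim e n l
end

variable {P N M E : Type}

/-- `⊤` defined from a given node expression: `¬(φ ∧ ¬φ)`. -/
def NExp.top (φ : NExp P N M E) : NExp P N M E := .neg (.conj φ (.neg φ))
/-- `ε := [⊤]`. -/
def PExp.eps (φ : NExp P N M E) : PExp P N M E := .test (NExp.top φ)
/-- `⟨α⟩φ := ⟨α[φ] =_e α[φ]⟩`. -/
def NExp.dia (e : E) (α : PExp P N M E) (φ : NExp P N M E) : NExp P N M E :=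
  .cmpEq e (α.comp (.test φ)) (α.comp (.test φ))
/-- `[α]φ := ¬⟨α⟩¬φ`. -/
def NExp.box (e : E) (α : PExp P N M E) (φ : NExp P N M E) : NExp P N M E :=
  .neg (NExp.dia e α (.neg φ))
/-- `@_i φ := ⟨@_i⟩φ`. -/
def NExp.atf (e : E) (i : N) (φ : NExp P N M E) : NExp P N M E := NExp.dia e (.at_ i) φ
def NExp.impl (φ ψ : NExp P N M E) : NExp P N M E := .neg (.conj φ (.neg ψ))
def NExp.iffN (φ ψ : NExp P N M E) : NExp P N M E := .conj (φ.impl ψ) (ψ.impl φ)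

/-- Number of atomic modal steps in a path expression. -/
def numA : PExp P N M E → ℕ
  | .mod _ => 1
  | .at_ _ => 0
  | .test _ => 0
  | .comp α β => numA α + numA β

mutual
/-- Modal depth of a path expression. -/
def mdP {P N M E : Type} : PExp P N M E → ℕ
  | .mod _ => 1
  | .at_ _ => 0
  | .test φ => mdN φ
  | .comp α β => max (mdP α) (numA α + mdP β)
/-- Modal depth of a node expression. -/
def mdN {P N M E : Type} : NExp P N M E → ℕ
  | .prop _ => 0
  | .nom _ => 0
  | .neg φ => mdN φ
  | .conj φ ψ => max (mdN φ) (mdN ψ)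
  | .cmpEq _ α β => max (mdP α) (mdP β)
  | .cmpNeq _ α β => max (mdP α) (mdP β)
end

mutual
/-- Nominals occurring in a path expression. -/
def pnoms {P N M E : Type} : PExp P N M E → List N
  | .mod _ => []
  | .at_ i => [i]
  | .test φ => nnoms φ
  | .comp α β => pnoms α ++ pnoms β
/-- Nominals occurring in a node expression. -/
def nnoms {P N M E : Type} : NExp P N M E → List N
  | .prop _ => []
  | .nom i => [i]
  | .neg φ => nnoms φ
  | .conj φ ψ => nnoms φ ++ nnoms ψ
  | .cmpEq _ α β => pnoms α ++ pnoms β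
  | .cmpNeq _ α β => pnoms α ++ pnoms β
end

/-- Data comparison, `true` for `=_e` and `false` for `≠_e`. -/
def dcmp (b : Bool) : E → PExp P N M E → PExp P N M E → NExp P N M E :=
  match b with
  | true => NExp.cmpEq
  | false => NExp.cmpNeq

/-- A Boolean valuation that respects negation and conjunction. -/
def BoolHom (v : NExp P N M E → Bool) : Prop :=
  (∀ φ, v (NExp.neg φ) = ! v φ) ∧ (∀ φ ψ, v (NExp.conj φ ψ) = (v φ && v ψ))

/-- Instances of propositional tautologies. -/
def Tautology (φ : NExp P N M E) : Prop :=
  ∀ v : NExp P N M E → Bool, BoolHom v → v φ = true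

/-- The axiomatic system HXP, with an additional set `Ax` of extra axioms
(take `Ax := ∅` for the basic system). -/
inductive ThmS (Ax : Set (NExp P N M E)) : NExp P N M E → Prop
  | ax : ∀ {φ}, φ ∈ Ax → ThmS Ax φ
  | taut : ∀ {φ}, Tautology φ → ThmS Ax φ
  | mp : ∀ {φ ψ}, ThmS Ax (φ.impl ψ) → ThmS Ax φ → ThmS Ax ψ
  | axK : ∀ (e : E) (α : PExp P N M E) (φ ψ : NExp P N M E),
      ThmS Ax ((NExp.box e α (φ.impl ψ)).impl ((NExp.box e α φ).impl (NExp.box e α ψ)))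
  | nec : ∀ {φ} (e : E) (α : PExp P N M E), ThmS Ax φ → ThmS Ax (NExp.box e α φ)
  | atSelfDual : ∀ (e : E) (i : N) (φ : NExp P N M E),
      ThmS Ax ((NExp.neg (NExp.atf e i φ)).iffN (NExp.atf e i (NExp.neg φ)))
  | atIntro : ∀ (e : E) (i : N) (φ : NExp P N M E),
      ThmS Ax ((NExp.nom i).impl (φ.iffN (NExp.atf e i φ)))
  | atRefl : ∀ (e : E) (i : N), ThmS Ax (NExp.atf e i (.nom i))
  | agree : ∀ (b : Bool) (e : E) (i j : N) (α β : PExp P N M E),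
      ThmS Ax ((dcmp b e ((PExp.at_ j).comp ((PExp.at_ i).comp α)) β).iffN
        (dcmp b e ((PExp.at_ i).comp α) β))
  | back : ∀ (b : Bool) (e : E) (i : N) (γ α β : PExp P N M E),
      ThmS Ax ((dcmp b e (γ.comp ((PExp.at_ i).comp α)) β).impl
        (dcmp b e ((PExp.at_ i).comp α) β))
  | compAssoc : ∀ (b : Bool) (e : E) (α β γ η : PExp P N M E),
      ThmS Ax ((dcmp b e ((α.comp β).comp γ) η).iffN (dcmp b e (α.comp (β.comp γ)) η))
  | compNeutral : ∀ (b : Bool) (e : E) (θ : NExp P N M E) (α β γ : PExp P N M E),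
      ThmS Ax ((dcmp b e (α.comp β) γ).iffN (dcmp b e (α.comp ((PExp.eps θ).comp β)) γ))
  | compNeutralR : ∀ (b : Bool) (e : E) (θ : NExp P N M E) (α γ : PExp P N M E),
      ThmS Ax ((dcmp b e α γ).iffN (dcmp b e (α.comp (PExp.eps θ)) γ))
  | compNeutralL : ∀ (b : Bool) (e : E) (θ : NExp P N M E) (β γ : PExp P N M E),
      ThmS Ax ((dcmp b e β γ).iffN (dcmp b e ((PExp.eps θ).comp β) γ))
  | compDist : ∀ (e : E) (α β : PExp P N M E) (φ : NExp P N M E),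
      ThmS Ax ((NExp.dia e (α.comp β) φ).iffN (NExp.dia e α (NExp.dia e β φ)))
  | equalAx : ∀ (e : E) (θ : NExp P N M E),
      ThmS Ax (NExp.cmpEq e (PExp.eps θ) (PExp.eps θ))
  | distinctAx : ∀ (e : E) (θ : NExp P N M E),
      ThmS Ax (NExp.neg (NExp.cmpNeq e (PExp.eps θ) (PExp.eps θ)))
  | atData : ∀ (e : E) (i j : N),
      ThmS Ax ((NExp.neg (NExp.cmpEq e (.at_ i) (.at_ j))).iffN
        (NExp.cmpNeq e (.at_ i) (.at_ j)))
  | epsTrans : ∀ (e : E) (θ : NExp P N M E) (α β : PExp P N M E),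
      ThmS Ax (((NExp.cmpEq e (PExp.eps θ) α).conj (NExp.cmpEq e (PExp.eps θ) β)).impl
        (NExp.cmpEq e α β))
  | cmpComm : ∀ (b : Bool) (e : E) (α β : PExp P N M E),
      ThmS Ax ((dcmp b e α β).iffN (dcmp b e β α))
  | cmpTest : ∀ (b : Bool) (e : E) (φ : NExp P N M E) (α β : PExp P N M E),
      ThmS Ax ((dcmp b e ((PExp.test φ).comp α) β).iffN (φ.conj (dcmp b e α β)))
  | atCmpDist : ∀ (b : Bool) (e e' : E) (i : N) (α β : PExp P N M E),
      ThmS Ax ((dcmp b e ((PExp.at_ i).comp α) ((PExp.at_ i).comp β)).impl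
        (NExp.atf e' i (dcmp b e α β)))
  | subpath : ∀ (b : Bool) (e e' : E) (θ : NExp P N M E) (α β γ : PExp P N M E),
      ThmS Ax ((dcmp b e (α.comp β) γ).impl (NExp.dia e' α (NExp.top θ)))
  | compCmpDist : ∀ (b : Bool) (e e' : E) (α β γ : PExp P N M E),
      ThmS Ax ((NExp.dia e' α (dcmp b e β γ)).impl (dcmp b e (α.comp β) (α.comp γ)))
  | name : ∀ {φ} (e : E) (j : N), ThmS Ax (NExp.atf e j φ) → j ∉ nnoms φ → ThmS Ax φ
  | paste : ∀ {θ} (b : Bool) (e e' : E) (i j : N) (a : M) (α β : PExp P N M E),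
      j ≠ i → j ∉ pnoms α → j ∉ pnoms β → j ∉ nnoms θ →
      ThmS Ax (((NExp.atf e' i (NExp.dia e' (.mod a) (.nom j))).conj
        (dcmp b e ((PExp.at_ j).comp α) β)).impl θ) →
      ThmS Ax ((dcmp b e ((PExp.at_ i).comp ((PExp.mod a).comp α)) β).impl θ)

/-- `implList [χ₁,…,χₙ] φ = χ₁ → (… → (χₙ → φ))`. -/
def implList (L : List (NExp P N M E)) (φ : NExp P N M E) : NExp P N M E :=
  L.foldr NExp.impl φ

/-- `φ` is a syntactic consequence of `Γ` (in HXP extended by `Ax`). -/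
def Deriv (Ax : Set (NExp P N M E)) (Γ : Set (NExp P N M E)) (φ : NExp P N M E) : Prop :=
  ∃ L : List (NExp P N M E), (∀ ψ ∈ L, ψ ∈ Γ) ∧ ThmS Ax (implList L φ)

/-- Consistency: `Γ` does not derive a contradiction. -/
def Consistent (Ax Γ : Set (NExp P N M E)) : Prop :=
  ¬ ∃ φ, Deriv Ax Γ φ ∧ Deriv Ax Γ (NExp.neg φ)

/-- Maximal consistent set. -/
def MCS (Ax Γ : Set (NExp P N M E)) : Prop :=
  Consistent Ax Γ ∧ ∀ φ ∉ Γ, ¬ Consistent Ax (insert φ Γ)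

/-- `Γ` is named: it contains some nominal. -/
def Named (Γ : Set (NExp P N M E)) : Prop := ∃ i : N, NExp.nom i ∈ Γ

/-- `Γ` is pasted (`e₀` is the equality symbol used in the abbreviations
`@_i χ` and `⟨a⟩χ`). -/
def Pasted (e₀ : E) (Γ : Set (NExp P N M E)) : Prop :=
  ∀ (b : Bool) (e : E) (i : N) (a : M) (α β : PExp P N M E),
    dcmp b e ((PExp.at_ i).comp ((PExp.mod a).comp α)) β ∈ Γ →
    ∃ j : N, (NExp.atf e₀ i (NExp.dia e₀ (.mod a) (.nom j))).conj
      (dcmp b e ((PExp.at_ j).comp α) β) ∈ Γ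

/-- `Δ_i = {j | @_i j ∈ Γ}`. -/
def ΔS (e₀ : E) (Γ : Set (NExp P N M E)) (i : N) : Set N :=
  {j | NExp.atf e₀ i (.nom j) ∈ Γ}

/-- The model extracted from `Γ`: the domain is `{Δ_i | i a nominal}`,
`Δ_i R_a Δ_j` iff `@_i⟨a⟩j ∈ Γ`, `Δ_i ∼_e Δ_j` iff `@_i⟨ε =_e @_j⟩ ∈ Γ`,
`p ∈ V(Δ_i)` iff `@_i p ∈ Γ`, and `nom(i) = Δ_i`. -/
def extModel (e₀ : E) (θ₀ : NExp P N M E) (Γ : Set (NExp P N M E)) : Model P N M E where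
  W := {S : Set N // ∃ i, S = ΔS e₀ Γ i}
  sim e S T := ∃ i j, S.1 = ΔS e₀ Γ i ∧ T.1 = ΔS e₀ Γ j ∧
    NExp.atf e₀ i (NExp.cmpEq e (PExp.eps θ₀) (.at_ j)) ∈ Γ
  R a S T := ∃ i j, S.1 = ΔS e₀ Γ i ∧ T.1 = ΔS e₀ Γ j ∧
    NExp.atf e₀ i (NExp.dia e₀ (.mod a) (.nom j)) ∈ Γ
  V S p := ∃ i, S.1 = ΔS e₀ Γ i ∧ NExp.atf e₀ i (.prop p) ∈ Γ
  nom i := ⟨ΔS e₀ Γ i, i, rfl⟩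

/-- `a^{n+1}` : composition of `n+1` steps of the (unique) modality. -/
def apow {P N : Type} : ℕ → PExp P N Unit Unit
  | 0 => .mod ()
  | n + 1 => .comp (.mod ()) (apow n)

/-- The pure axioms `no-loops` (`@_i ¬⟨aⁿ⟩i` for all `n > 0`) and `no-join`
(`@_j⟨a⟩i ∧ @_k⟨a⟩i → @_j k`). -/
def forestAx (P N : Type) : Set (NExp P N Unit Unit) :=
  {φ | (∃ (i : N) (n : ℕ),
          φ = NExp.atf () i (NExp.neg (NExp.dia () (apow n) (.nom i)))) ∨
       (∃ i j k : N,
          φ = ((NExp.atf () j (NExp.dia () (.mod ()) (.nom i))).conj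
                (NExp.atf () k (NExp.dia () (.mod ()) (.nom i)))).impl
              (NExp.atf () j (.nom k)))}

/-- `iterR R h x y` : `y` is reachable from `x` in exactly `h` `R`-steps. -/
def iterR {W : Type} (R : W → W → Prop) : ℕ → W → W → Prop
  | 0, x, y => x = y
  | h + 1, x, y => ∃ z, R x z ∧ iterR R h z y

/-- The points of the extracted model reachable in at most `md(φ)` steps from a
point named by a nominal of `φ` or by `i`. -/
def restS (θ₀ : NExp P N Unit Unit) (Γ : Set (NExp P N Unit Unit))
    (φ : NExp P N Unit Unit) (i : N) : Set (extModel () θ₀ Γ).W :=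
  {w | ∃ k ∈ i :: nnoms φ, ∃ h ≤ mdN φ,
        iterR ((extModel () θ₀ Γ).R ()) h ((extModel () θ₀ Γ).nom k) w}

/-- Restriction of a model to a subset `S` of its domain, with an adjusted
nominal assignment `nm`. -/
def restrModel (𝔪 : Model P N Unit Unit) (S : Set 𝔪.W) (nm : N → {x // x ∈ S}) :
    Model P N Unit Unit where
  W := {x // x ∈ S}
  sim e x y := 𝔪.sim e x.1 y.1
  R a x y := 𝔪.R a x.1 y.1
  V x p := 𝔪.V x.1 p
  nom := nm

theorem iterR_succ_right {W : Type} {R : W → W → Prop} :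
    ∀ {h : ℕ} {x y z : W}, iterR R h x y → R y z → iterR R (h + 1) x z
  | 0, _, _, z, (rfl : _ = _), hyz => ⟨z, hyz, rfl⟩
  | _ + 1, _, _, _, ⟨w, hxw, hwy⟩, hyz => ⟨w, hxw, iterR_succ_right hwy hyz⟩

theorem numA_le_mdP : ∀ α : PExp P N M E, numA α ≤ mdP α
  | .mod _ | .at_ _ | .test _ => by simp [numA, mdP]
  | .comp α β => by
    have := numA_le_mdP α
    have := numA_le_mdP β
    simp only [numA, mdP]
    omega

def reachWithin (𝔪 : Model P N Unit E) (K : List N) (d : ℕ) : Set 𝔪.W :=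
  {w | ∃ k ∈ K, ∃ h ≤ d, iterR (𝔪.R ()) h (𝔪.nom k) w}

section Reach

variable {𝔪 : Model P N Unit E} {K : List N}

theorem nom_mem_reachWithin {k : N} (hk : k ∈ K) (d : ℕ) : 𝔪.nom k ∈ reachWithin 𝔪 K d :=
  ⟨k, hk, 0, d.zero_le, rfl⟩

theorem reachWithin_mono {d d' : ℕ} (hd : d ≤ d') : reachWithin 𝔪 K d ⊆ reachWithin 𝔪 K d' :=
  fun _ ⟨k, hk, h, hh, hit⟩ => ⟨k, hk, h, hh.trans hd, hit⟩

theorem mem_reachWithin_of_R {d : ℕ} {m n : 𝔪.W} (hm : m ∈ reachWithin 𝔪 K d)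
    (hmn : 𝔪.R () m n) : n ∈ reachWithin 𝔪 K (d + 1) :=
  let ⟨k, hk, h, hh, hit⟩ := hm
  ⟨k, hk, h + 1, by omega, iterR_succ_right hit hmn⟩

theorem mem_reachWithin_of_psat :
    ∀ {α : PExp P N Unit E} {d : ℕ} {m n : 𝔪.W}, pnoms α ⊆ K →
      m ∈ reachWithin 𝔪 K d → psat 𝔪 α m n → n ∈ reachWithin 𝔪 K (d + numA α)
  | .mod (), _, _, _, _, hm, hmn => mem_reachWithin_of_R hm hmn
  | .at_ j, _, _, _, hK, _, rfl => nom_mem_reachWithin (hK (List.mem_singleton_self j)) _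
  | .test _, _, _, _, _, hm, ⟨rfl, _⟩ => hm
  | .comp α β, _, _, _, hK, hm, ⟨l, hml, hln⟩ => by
    have hl := mem_reachWithin_of_psat (List.Subset.trans (List.subset_append_left _ _) hK) hm hml
    have hn := mem_reachWithin_of_psat (List.Subset.trans (List.subset_append_right _ _) hK) hl hln
    simpa only [numA, Nat.add_assoc] using hn

end Reach

theorem restS_eq_reachWithin (θ₀ : NExp P N Unit Unit) (Γ : Set (NExp P N Unit Unit))
    (φ : NExp P N Unit Unit) (i : N) :
    restS θ₀ Γ φ i = reachWithin (extModel () θ₀ Γ) (i :: nnoms φ) (mdN φ) :=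
  rfl

section Restriction

variable {𝔪 : Model P N Unit Unit} {K : List N} {D : ℕ} {S : Set 𝔪.W}
  {nm : N → {x // x ∈ S}}

theorem mem_of_psat (hS : reachWithin 𝔪 K D ⊆ S) {α : PExp P N Unit Unit}
    (hK : pnoms α ⊆ K) {d : ℕ} {m n : 𝔪.W} (hm : m ∈ reachWithin 𝔪 K d)
    (hD : d + mdP α ≤ D) (hmn : psat 𝔪 α m n) : n ∈ S :=
  hS (reachWithin_mono (by have := numA_le_mdP α; omega) (mem_reachWithin_of_psat hK hm hmn))

theorem exists_psat_restrModel_pair_iff {α β : PExp P N Unit Unit} {m : 𝔪.W} (hmS : m ∈ S)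
    (hα : ∀ n, psat (restrModel 𝔪 S nm) α ⟨m, hmS⟩ n ↔ psat 𝔪 α m n.1)
    (hβ : ∀ n, psat (restrModel 𝔪 S nm) β ⟨m, hmS⟩ n ↔ psat 𝔪 β m n.1)
    (hαS : ∀ n, psat 𝔪 α m n → n ∈ S) (hβS : ∀ n, psat 𝔪 β m n → n ∈ S)
    (Q : 𝔪.W → 𝔪.W → Prop) :
    (∃ n l, psat (restrModel 𝔪 S nm) α ⟨m, hmS⟩ n ∧ psat (restrModel 𝔪 S nm) β ⟨m, hmS⟩ l ∧
        Q n.1 l.1) ↔ ∃ n l, psat 𝔪 α m n ∧ psat 𝔪 β m l ∧ Q n l := by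
  constructor
  · rintro ⟨n, l, hn, hl, hQ⟩
    exact ⟨n.1, l.1, (hα n).mp hn, (hβ l).mp hl, hQ⟩
  · rintro ⟨n, l, hn, hl, hQ⟩
    exact ⟨⟨n, hαS n hn⟩, ⟨l, hβS l hl⟩, (hα _).mpr hn, (hβ _).mpr hl, hQ⟩

mutual

theorem psat_restrModel_iff (hS : reachWithin 𝔪 K D ⊆ S) (hnm : ∀ k ∈ K, (nm k).1 = 𝔪.nom k) :
    ∀ (α : PExp P N Unit Unit), pnoms α ⊆ K →
    ∀ {d : ℕ} {m : 𝔪.W}, m ∈ reachWithin 𝔪 K d → d + mdP α ≤ D →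
    ∀ (hmS : m ∈ S) (n : {x // x ∈ S}),
      psat (restrModel 𝔪 S nm) α ⟨m, hmS⟩ n ↔ psat 𝔪 α m n.1
  | .mod _, _, _, _, _, _, _, _ => Iff.rfl
  | .at_ j, hK, _, _, _, _, _, n => by
    change nm j = n ↔ 𝔪.nom j = n.1
    rw [← hnm j (hK (List.mem_singleton_self j)), Subtype.ext_iff]
  | .test ψ, hK, d, m, hm, hD, hmS, n => by
    change _ = n ∧ _ ↔ m = n.1 ∧ _
    rw [nsat_restrModel_iff hS hnm ψ hK hm hD hmS, Subtype.ext_iff]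
  | .comp α β, hK, d, m, hm, hD, hmS, n => by
    simp only [mdP] at hD
    have hKα : pnoms α ⊆ K := List.Subset.trans (List.subset_append_left _ _) hK
    have hKβ : pnoms β ⊆ K := List.Subset.trans (List.subset_append_right _ _) hK
    have ihα := psat_restrModel_iff hS hnm α hKα hm (by omega) hmS
    have reach {l : 𝔪.W} (hl : psat 𝔪 α m l) : l ∈ reachWithin 𝔪 K (d + numA α) :=
      mem_reachWithin_of_psat hKα hm hl
    have ihβ {l : 𝔪.W} (hl : psat 𝔪 α m l) (hlS : l ∈ S) :=
      psat_restrModel_iff hS hnm β hKβ (reach hl) (by omega) hlS n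
    constructor
    · rintro ⟨⟨l, hlS⟩, hml, hln⟩
      have hml := (ihα _).mp hml
      exact ⟨l, hml, (ihβ hml hlS).mp hln⟩
    · rintro ⟨l, hml, hln⟩
      have hlS : l ∈ S := mem_of_psat hS hKα hm (by omega) hml
      exact ⟨⟨l, hlS⟩, (ihα ⟨l, hlS⟩).mpr hml, (ihβ hml hlS).mpr hln⟩

theorem nsat_restrModel_iff (hS : reachWithin 𝔪 K D ⊆ S) (hnm : ∀ k ∈ K, (nm k).1 = 𝔪.nom k) :
    ∀ (ψ : NExp P N Unit Unit), nnoms ψ ⊆ K →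
    ∀ {d : ℕ} {m : 𝔪.W}, m ∈ reachWithin 𝔪 K d → d + mdN ψ ≤ D →
    ∀ (hmS : m ∈ S), nsat (restrModel 𝔪 S nm) ψ ⟨m, hmS⟩ ↔ nsat 𝔪 ψ m
  | .prop _, _, _, _, _, _, _ => Iff.rfl
  | .nom j, hK, _, m, _, _, hmS => by
    change nm j = ⟨m, hmS⟩ ↔ 𝔪.nom j = m
    rw [← hnm j (hK (List.mem_singleton_self j)), Subtype.ext_iff]
  | .neg ψ, hK, _, _, hm, hD, hmS =>
    not_congr (nsat_restrModel_iff hS hnm ψ hK hm hD hmS)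
  | .conj ψ χ, hK, _, _, hm, hD, hmS => by
    simp only [mdN] at hD
    exact and_congr
      (nsat_restrModel_iff hS hnm ψ (List.Subset.trans (List.subset_append_left _ _) hK) hm
        (by omega) hmS)
      (nsat_restrModel_iff hS hnm χ (List.Subset.trans (List.subset_append_right _ _) hK) hm
        (by omega) hmS)
  | .cmpEq e α β, hK, _, _, hm, hD, hmS => by
    simp only [mdN] at hD
    have hKα : pnoms α ⊆ K := List.Subset.trans (List.subset_append_left _ _) hK
    have hKβ : pnoms β ⊆ K := List.Subset.trans (List.subset_append_right _ _) hK
    exact exists_psat_restrModel_pair_iff hmS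
      (psat_restrModel_iff hS hnm α hKα hm (by omega) hmS)
      (psat_restrModel_iff hS hnm β hKβ hm (by omega) hmS)
      (fun _ => mem_of_psat hS hKα hm (by omega)) (fun _ => mem_of_psat hS hKβ hm (by omega))
      (𝔪.sim e)
  | .cmpNeq e α β, hK, _, _, hm, hD, hmS => by
    simp only [mdN] at hD
    have hKα : pnoms α ⊆ K := List.Subset.trans (List.subset_append_left _ _) hK
    have hKβ : pnoms β ⊆ K := List.Subset.trans (List.subset_append_right _ _) hK
    exact exists_psat_restrModel_pair_iff hmS
      (psat_restrModel_iff hS hnm α hKα hm (by omega) hmS)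
      (psat_restrModel_iff hS hnm β hKβ hm (by omega) hmS)
      (fun _ => mem_of_psat hS hKα hm (by omega)) (fun _ => mem_of_psat hS hKβ hm (by omega))
      (fun n l => ¬ 𝔪.sim e n l)

end

end Restriction

/-- Restriction lemma for extracted models over HXP + forest axioms: if
`M_Γ, Δ_i ⊨ φ` then the restriction of `M_Γ` to the points reachable in at most
`md(φ)` steps from the points named by `Nom(φ) ∪ {i}` — with any adjustment of
the nominal assignment that is the identity on `Nom(φ) ∪ {i}` — still satisfies
`φ` at `Δ_i`. -/
theorem restriction_lemma (θ₀ : NExp P N Unit Unit) (Γ : Set (NExp P N Unit Unit))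
    (hmcs : MCS (forestAx P N) Γ) (hnamed : Named Γ) (hpasted : Pasted () Γ)
    (φ : NExp P N Unit Unit) (i : N)
    (hφ : nsat (extModel () θ₀ Γ) φ ((extModel () θ₀ Γ).nom i)) :
    ∀ nm : N → {x // x ∈ restS θ₀ Γ φ i},
      (∀ k ∈ i :: nnoms φ, (nm k).1 = (extModel () θ₀ Γ).nom k) →
      nsat (restrModel (extModel () θ₀ Γ) (restS θ₀ Γ φ i) nm) φ
        ⟨(extModel () θ₀ Γ).nom i,
          by exact ⟨i, List.mem_cons_self, 0, Nat.zero_le _, rfl⟩⟩ := by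
  intro nm hnm
  exact (nsat_restrModel_iff (restS_eq_reachWithin θ₀ Γ φ i).symm.subset hnm φ
    (List.subset_cons_self _ _) (nom_mem_reachWithin List.mem_cons_self 0)
    (by omega) _).mpr hφ
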